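/- Let Ω ⊆ ℂ be open, h holomorphic on Ω with a zero of order n ≥ 1 at z₀ ∈ Ω, and u a C² solution of Δu = 4|h|²e^{2u} on Ω. Define A_u(z) = B_u(z) + (1/2)(h'/h)'(z) - (1/4)(h'/h)²(z), where B_u(z) = u_{zz} - (u_z)² - (h'/h)u_z. Then A_u is meromorphic near z₀ with a pole of order exactly 2 at z₀, and the coefficient of (z - z₀)^{-2} in its Laurent expansion equals (1 - (n+1)²)/4. -/

import Mathlib

open Complex

/-- Euclidean Laplacian of a real-valued function on `ℂ`. -/
noncomputable def lap (u : ℂ → ℝ) (z : ℂ) : ℝ :=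
  fderiv ℝ (fun w => fderiv ℝ u w 1) z 1 + fderiv ℝ (fun w => fderiv ℝ u w Complex.I) z Complex.I

/-- Wirtinger derivative `∂f/∂z = (∂f/∂x - i ∂f/∂y)/2`. -/
noncomputable def wderiv (f : ℂ → ℂ) (z : ℂ) : ℂ :=
  (1/2 : ℂ) * (fderiv ℝ f z 1 - Complex.I * fderiv ℝ f z Complex.I)

/-- Conjugate Wirtinger derivative `∂f/∂z̄ = (∂f/∂x + i ∂f/∂y)/2`. -/
noncomputable def wbar (f : ℂ → ℂ) (z : ℂ) : ℂ :=
  (1/2 : ℂ) * (fderiv ℝ f z 1 + Complex.I * fderiv ℝ f z Complex.I)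

lemma wderiv_eq {f : ℂ → ℂ} {L : ℂ →L[ℝ] ℂ} {z : ℂ} (hf : HasFDerivAt f L z) :
    wderiv f z = (1/2 : ℂ) * (L 1 - Complex.I * L Complex.I) := by
  rw [wderiv, hf.fderiv]

lemma wbar_eq {f : ℂ → ℂ} {L : ℂ →L[ℝ] ℂ} {z : ℂ} (hf : HasFDerivAt f L z) :
    wbar f z = (1/2 : ℂ) * (L 1 + Complex.I * L Complex.I) := by
  rw [wbar, hf.fderiv]

section arith
variable {f g : ℂ → ℂ} {z : ℂ}

lemma wbar_sub (hf : DifferentiableAt ℝ f z) (hg : DifferentiableAt ℝ g z) :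
    wbar (fun t => f t - g t) z = wbar f z - wbar g z := by
  rw [wbar_eq (f := fun t => f t - g t) (hf.hasFDerivAt.sub hg.hasFDerivAt), wbar, wbar]
  simp; ring

lemma wbar_mul (hf : DifferentiableAt ℝ f z) (hg : DifferentiableAt ℝ g z) :
    wbar (fun t => f t * g t) z = f z * wbar g z + wbar f z * g z := by
  rw [wbar_eq (f := fun t => f t * g t) (hf.hasFDerivAt.mul hg.hasFDerivAt), wbar, wbar]
  simp [smul_eq_mul]; ring

lemma wderiv_mul (hf : DifferentiableAt ℝ f z) (hg : DifferentiableAt ℝ g z) :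
    wderiv (fun t => f t * g t) z = f z * wderiv g z + wderiv f z * g z := by
  rw [wderiv_eq (f := fun t => f t * g t) (hf.hasFDerivAt.mul hg.hasFDerivAt), wderiv, wderiv]
  simp [smul_eq_mul]; ring

lemma wderiv_const_mul (c : ℂ) (hf : DifferentiableAt ℝ f z) :
    wderiv (fun t => c * f t) z = c * wderiv f z := by
  rw [wderiv_eq (hf.hasFDerivAt.const_mul c), wderiv]
  simp [smul_eq_mul]; ring

lemma holo_fderiv_apply (hf : DifferentiableAt ℂ f z) (v : ℂ) :
    fderiv ℝ f z v = v * deriv f z := by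
  rw [hf.fderiv_restrictScalars ℝ]
  simp only [ContinuousLinearMap.coe_restrictScalars']
  rw [show fderiv ℂ f z v = v • deriv f z from by
    rw [← toSpanSingleton_deriv]; simp]
  simp [smul_eq_mul]

lemma wderiv_of_holo (hf : DifferentiableAt ℂ f z) : wderiv f z = deriv f z := by
  rw [wderiv, holo_fderiv_apply hf 1, holo_fderiv_apply hf Complex.I]
  have := Complex.I_mul_I
  field_simp
  linear_combination -deriv f z * Complex.I_mul_I

lemma wbar_of_holo (hf : DifferentiableAt ℂ f z) : wbar f z = 0 := by
  rw [wbar, holo_fderiv_apply hf 1, holo_fderiv_apply hf Complex.I]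
  linear_combination ((1:ℂ)/2) * deriv f z * Complex.I_mul_I

lemma conj_fderiv_apply (hf : DifferentiableAt ℝ f z) (v : ℂ) :
    fderiv ℝ (fun t => (starRingEnd ℂ) (f t)) z v = (starRingEnd ℂ) (fderiv ℝ f z v) := by
  have : HasFDerivAt (fun t => (starRingEnd ℂ) (f t))
      ((Complex.conjCLE.toContinuousLinearMap.restrictScalars ℝ).comp (fderiv ℝ f z)) z := by
    exact (Complex.conjCLE.toContinuousLinearMap.restrictScalars ℝ).hasFDerivAt.comp z hf.hasFDerivAt
  rw [this.fderiv]
  simp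

lemma wderiv_conj_holo (hf : DifferentiableAt ℂ f z) :
    wderiv (fun t => (starRingEnd ℂ) (f t)) z = 0 := by
  rw [wderiv, conj_fderiv_apply (hf.restrictScalars ℝ) 1, conj_fderiv_apply (hf.restrictScalars ℝ) Complex.I,
    holo_fderiv_apply hf 1, holo_fderiv_apply hf Complex.I]
  simp [map_mul]
  linear_combination ((starRingEnd ℂ) (deriv f z)) * Complex.I_sq

/-- chain rule with entire outer exp -/
lemma wderiv_exp_comp (hg : DifferentiableAt ℝ g z) :
    wderiv (fun t => Complex.exp (g t)) z = Complex.exp (g z) * wderiv g z := by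
  have hexp : HasFDerivAt (fun t => Complex.exp (g t))
      (((ContinuousLinearMap.smulRight (1 : ℂ →L[ℂ] ℂ) (Complex.exp (g z))).restrictScalars ℝ).comp
        (fderiv ℝ g z)) z :=
    ((Complex.hasDerivAt_exp (g z)).hasFDerivAt.restrictScalars ℝ).comp z hg.hasFDerivAt
  rw [wderiv_eq hexp, wderiv]
  simp [smul_eq_mul]
  ring

lemma ofReal_fderiv_apply {u : ℂ → ℝ} (hu : DifferentiableAt ℝ u z) (v : ℂ) :
    fderiv ℝ (fun t => ((u t : ℂ))) z v = ((fderiv ℝ u z v : ℝ) : ℂ) := by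
  have : HasFDerivAt (fun t => ((u t : ℂ))) (Complex.ofRealCLM.comp (fderiv ℝ u z)) z :=
    Complex.ofRealCLM.hasFDerivAt.comp z hu.hasFDerivAt
  rw [this.fderiv]; simp

end arith



section second
variable {F : Type*} [NormedAddCommGroup F] [NormedSpace ℝ F]

lemma hasFDerivAt_fderiv_apply {f : ℂ → F} {s : Set ℂ} (hs : IsOpen s)
    (hf : ContDiffOn ℝ 2 f s) {z : ℂ} (hz : z ∈ s) (a : ℂ) :
    HasFDerivAt (fun t => fderiv ℝ f t a)
      ((ContinuousLinearMap.apply ℝ F a).comp (fderiv ℝ (fderiv ℝ f) z)) z := by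
  have h1 : ContDiffOn ℝ 1 (fderiv ℝ f) s := hf.fderiv_of_isOpen hs (by norm_num)
  have h2 : DifferentiableAt ℝ (fderiv ℝ f) z :=
    (h1.contDiffAt (hs.mem_nhds hz)).differentiableAt one_ne_zero
  exact ((ContinuousLinearMap.apply ℝ F a).hasFDerivAt).comp z h2.hasFDerivAt

lemma fderiv2_swap {f : ℂ → F} {s : Set ℂ} (hs : IsOpen s)
    (hf : ContDiffOn ℝ 2 f s) {z : ℂ} (hz : z ∈ s) (a b : ℂ) :
    fderiv ℝ (fderiv ℝ f) z a b = fderiv ℝ (fderiv ℝ f) z b a := by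
  have := (hf.contDiffAt (hs.mem_nhds hz)).isSymmSndFDerivAt (by simp)
  exact this a b

end second

section commute
variable {f : ℂ → ℂ} {s : Set ℂ} {z : ℂ}

lemma wderiv_wbar_eq (hs : IsOpen s) (hf : ContDiffOn ℝ 2 f s) (hz : z ∈ s) :
    wderiv (fun t => wbar f t) z =
      (1/4 : ℂ) * (fderiv ℝ (fderiv ℝ f) z 1 1 +
        fderiv ℝ (fderiv ℝ f) z Complex.I Complex.I) := by
  set D := fderiv ℝ (fderiv ℝ f) z with hD
  have h1 := hasFDerivAt_fderiv_apply hs hf hz 1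
  have hI := hasFDerivAt_fderiv_apply hs hf hz Complex.I
  have hb : HasFDerivAt (fun t => wbar f t)
      ((1/2 : ℂ) • (((ContinuousLinearMap.apply ℝ ℂ 1).comp D) +
        Complex.I • ((ContinuousLinearMap.apply ℝ ℂ Complex.I).comp D))) z := by
    have := (h1.add (hI.const_mul Complex.I)).const_mul ((1:ℂ)/2)
    convert this using 2 <;> rfl
  have := HasFDerivAt.fderiv hb
  unfold wderiv
  rw [this]
  have hswap : D 1 Complex.I = D Complex.I 1 := fderiv2_swap hs hf hz 1 Complex.I
  simp only [ContinuousLinearMap.smul_apply, ContinuousLinearMap.add_apply,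
    ContinuousLinearMap.comp_apply, ContinuousLinearMap.apply_apply, smul_eq_mul]
  linear_combination (Complex.I/4) * hswap - (D Complex.I Complex.I/4) * Complex.I_sq

lemma wbar_wderiv_eq (hs : IsOpen s) (hf : ContDiffOn ℝ 2 f s) (hz : z ∈ s) :
    wbar (fun t => wderiv f t) z =
      (1/4 : ℂ) * (fderiv ℝ (fderiv ℝ f) z 1 1 +
        fderiv ℝ (fderiv ℝ f) z Complex.I Complex.I) := by
  set D := fderiv ℝ (fderiv ℝ f) z with hD
  have h1 := hasFDerivAt_fderiv_apply hs hf hz 1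
  have hI := hasFDerivAt_fderiv_apply hs hf hz Complex.I
  have hb : HasFDerivAt (fun t => wderiv f t)
      ((1/2 : ℂ) • (((ContinuousLinearMap.apply ℝ ℂ 1).comp D) -
        Complex.I • ((ContinuousLinearMap.apply ℝ ℂ Complex.I).comp D))) z := by
    have := (h1.sub (hI.const_mul Complex.I)).const_mul ((1:ℂ)/2)
    convert this using 2 <;> rfl
  have := HasFDerivAt.fderiv hb
  unfold wbar
  rw [this]
  have hswap : D 1 Complex.I = D Complex.I 1 := fderiv2_swap hs hf hz 1 Complex.I
  simp only [ContinuousLinearMap.smul_apply, ContinuousLinearMap.add_apply,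
    ContinuousLinearMap.sub_apply, ContinuousLinearMap.comp_apply,
    ContinuousLinearMap.apply_apply, smul_eq_mul]
  linear_combination (-(Complex.I)/4) * hswap - (D Complex.I Complex.I/4) * Complex.I_sq

lemma wbar_wderiv_comm (hs : IsOpen s) (hf : ContDiffOn ℝ 2 f s) (hz : z ∈ s) :
    wbar (fun t => wderiv f t) z = wderiv (fun t => wbar f t) z := by
  rw [wbar_wderiv_eq hs hf hz, wderiv_wbar_eq hs hf hz]
end commute

section laplacian
variable {u : ℂ → ℝ} {s : Set ℂ} {z : ℂ}

lemma contDiffOn_ofReal (hu : ContDiffOn ℝ (⊤ : ℕ∞) u s) :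
    ContDiffOn ℝ (⊤ : ℕ∞) (fun t => ((u t : ℂ))) s :=
  Complex.ofRealCLM.contDiff.comp_contDiffOn hu

lemma lap_eq_D (hs : IsOpen s) (hu : ContDiffOn ℝ (⊤ : ℕ∞) u s) (hz : z ∈ s) :
    lap u z = fderiv ℝ (fderiv ℝ u) z 1 1 + fderiv ℝ (fderiv ℝ u) z Complex.I Complex.I := by
  have hu2 : ContDiffOn ℝ 2 u s := hu.of_le (WithTop.coe_le_coe.mpr le_top)
  rw [lap, (hasFDerivAt_fderiv_apply hs hu2 hz 1).fderiv,
    (hasFDerivAt_fderiv_apply hs hu2 hz Complex.I).fderiv]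
  simp

lemma snd_fderiv_ofReal (hs : IsOpen s) (hu : ContDiffOn ℝ (⊤ : ℕ∞) u s) (hz : z ∈ s) (a b : ℂ) :
    fderiv ℝ (fderiv ℝ (fun t => ((u t : ℂ)))) z b a
      = ((fderiv ℝ (fderiv ℝ u) z b a : ℝ) : ℂ) := by
  have hu2 : ContDiffOn ℝ 2 u s := hu.of_le (WithTop.coe_le_coe.mpr le_top)
  have huC : ContDiffOn ℝ 2 (fun t => ((u t : ℂ))) s := (contDiffOn_ofReal hu).of_le (WithTop.coe_le_coe.mpr le_top)
  have h1 := hasFDerivAt_fderiv_apply hs huC hz a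
  have e1 : fderiv ℝ (fun t => fderiv ℝ (fun x => ((u x : ℂ))) t a) z b
      = fderiv ℝ (fderiv ℝ (fun t => ((u t : ℂ)))) z b a := by
    rw [h1.fderiv]; simp
  rw [← e1]
  have h2 := hasFDerivAt_fderiv_apply hs hu2 hz a
  have heq : (fun t => fderiv ℝ (fun x => ((u x : ℂ))) t a)
      =ᶠ[nhds z] (fun t => ((fderiv ℝ u t a : ℝ) : ℂ)) := by
    filter_upwards [hs.mem_nhds hz] with t ht
    exact ofReal_fderiv_apply
      ((hu.contDiffAt (hs.mem_nhds ht)).differentiableAt (by simp)) a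
  rw [heq.fderiv_eq]
  have h3 : HasFDerivAt (fun t => ((fderiv ℝ u t a : ℝ) : ℂ))
      (Complex.ofRealCLM.comp ((ContinuousLinearMap.apply ℝ ℝ a).comp (fderiv ℝ (fderiv ℝ u) z))) z :=
    Complex.ofRealCLM.hasFDerivAt.comp z h2
  rw [h3.fderiv]
  simp

lemma wbar_wderiv_ofReal (hs : IsOpen s) (hu : ContDiffOn ℝ (⊤ : ℕ∞) u s) (hz : z ∈ s) :
    wbar (fun t => wderiv (fun x => ((u x : ℂ))) t) z = ((lap u z : ℝ) : ℂ) / 4 := by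
  have huC : ContDiffOn ℝ 2 (fun t => ((u t : ℂ))) s := (contDiffOn_ofReal hu).of_le (WithTop.coe_le_coe.mpr le_top)
  rw [wbar_wderiv_eq hs huC hz, snd_fderiv_ofReal hs hu hz 1 1,
    snd_fderiv_ofReal hs hu hz Complex.I Complex.I, lap_eq_D hs hu hz]
  push_cast
  ring

lemma contDiffOn_wderiv {f : ℂ → ℂ} (hs : IsOpen s) (hf : ContDiffOn ℝ (⊤ : ℕ∞) f s) :
    ContDiffOn ℝ (⊤ : ℕ∞) (fun t => wderiv f t) s := by
  have h1 : ContDiffOn ℝ (⊤ : ℕ∞) (fderiv ℝ f) s := hf.fderiv_of_isOpen hs (by simp)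
  have h2 : ContDiffOn ℝ (⊤ : ℕ∞) (fun t => fderiv ℝ f t 1) s := h1.clm_apply contDiffOn_const
  have h3 : ContDiffOn ℝ (⊤ : ℕ∞) (fun t => fderiv ℝ f t Complex.I) s := h1.clm_apply contDiffOn_const
  exact contDiffOn_const.mul (h2.sub (contDiffOn_const.mul h3))

end laplacian

lemma clm_apply_eq (L : ℂ →L[ℝ] ℂ) (v : ℂ) :
    L v = (v.re : ℂ) * L 1 + (v.im : ℂ) * L Complex.I := by
  have hv : v = v.re • (1:ℂ) + v.im • Complex.I := by
    simp [Complex.real_smul, Complex.re_add_im]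
  calc L v = L (v.re • (1:ℂ) + v.im • Complex.I) := by rw [← hv]
    _ = v.re • L 1 + v.im • L Complex.I := by rw [map_add, map_smul, map_smul]
    _ = (v.re : ℂ) * L 1 + (v.im : ℂ) * L Complex.I := by
        simp [Complex.real_smul]

/-- Cauchy–Riemann: real differentiable + `wbar = 0` implies complex differentiable. -/
lemma differentiableAt_of_wbar_eq_zero {f : ℂ → ℂ} {z : ℂ}
    (hf : DifferentiableAt ℝ f z) (hw : wbar f z = 0) : DifferentiableAt ℂ f z := by
  set L := fderiv ℝ f z with hL
  have h2 : L 1 + Complex.I * L Complex.I = 0 := by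
    rw [wbar] at hw
    field_simp at hw
    linear_combination hw
  have hLi : L Complex.I = Complex.I * L 1 := by
    have h3 : Complex.I * (Complex.I * L Complex.I) = Complex.I * (- L 1) := by
      rw [show Complex.I * L Complex.I = - L 1 by linear_combination h2]
    have h4 : (Complex.I * Complex.I) * L Complex.I = - (Complex.I * L 1) := by
      rw [mul_assoc]; rw [h3]; ring
    rw [Complex.I_mul_I] at h4
    linear_combination -h4
  set L' : ℂ →L[ℂ] ℂ := (L 1) • (ContinuousLinearMap.id ℂ ℂ) with hL'
  have hres : L'.restrictScalars ℝ = L := by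
    apply ContinuousLinearMap.ext
    intro v
    rw [clm_apply_eq L v, hLi]
    simp only [ContinuousLinearMap.coe_restrictScalars', hL',
      ContinuousLinearMap.coe_smul', Pi.smul_apply, ContinuousLinearMap.coe_id', id_eq,
      smul_eq_mul]
    linear_combination -(Complex.re_add_im v) * L 1
  exact ⟨L', hasFDerivAt_of_restrictScalars ℝ hf.hasFDerivAt hres⟩


/-- `B_u = u_zz - (u_z)² - (h'/h) u_z`. -/
noncomputable def Bu (h : ℂ → ℂ) (u : ℂ → ℝ) (z : ℂ) : ℂ :=
  wderiv (fun w => wderiv (fun t => ((u t : ℂ))) w) z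
    - (wderiv (fun t => ((u t : ℂ))) z)^2
    - (deriv h z / h z) * wderiv (fun t => ((u t : ℂ))) z

section buholo

lemma wderiv_congr {f g : ℂ → ℂ} {z : ℂ} (hfg : f =ᶠ[nhds z] g) : wderiv f z = wderiv g z := by
  rw [wderiv, wderiv, hfg.fderiv_eq]

lemma Bu_differentiableAt {Ω : Set ℂ} (hΩ : IsOpen Ω) {h : ℂ → ℂ} {u : ℂ → ℝ}
    (hh : DifferentiableOn ℂ h Ω) (hu : ContDiffOn ℝ (⊤ : ℕ∞) u Ω)
    (hpde : ∀ z ∈ Ω, lap u z = 4 * ‖h z‖^2 * Real.exp (2 * u z))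
    {z : ℂ} (hz : z ∈ Ω) (hhz : h z ≠ 0) : DifferentiableAt ℂ (Bu h u) z := by
  set uC : ℂ → ℂ := fun t => ((u t : ℂ)) with huCdef
  set w : ℂ → ℂ := fun t => wderiv uC t with hwdef
  set E : ℂ → ℂ := fun t => Complex.exp (2 * uC t) with hEdef
  set ρ : ℂ → ℂ := fun t => h t * (starRingEnd ℂ) (h t) * E t with hρdef
  have huCC : ContDiffOn ℝ (⊤ : ℕ∞) uC Ω := contDiffOn_ofReal hu
  have hwC : ContDiffOn ℝ (⊤ : ℕ∞) w Ω := contDiffOn_wderiv hΩ huCC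
  have hwdC : ContDiffOn ℝ (⊤ : ℕ∞) (fun t => wderiv w t) Ω := contDiffOn_wderiv hΩ hwC
  -- pointwise pde identity
  have hwbarw : ∀ t ∈ Ω, wbar w t = ρ t := by
    intro t ht
    have h1 : wbar w t = ((lap u t : ℝ) : ℂ) / 4 := wbar_wderiv_ofReal hΩ hu ht
    rw [h1, hpde t ht, hρdef]
    have habs : ((‖h t‖)^2 : ℂ) = h t * (starRingEnd ℂ) (h t) := by
      rw [Complex.mul_conj]
      norm_cast
      exact Complex.sq_norm (h t)
    push_cast
    rw [← habs, hEdef]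
    simp only [huCdef]
    rw [show ((2:ℂ) * ((u t : ℝ) : ℂ)) = (((2 * u t : ℝ) : ℝ) : ℂ) by push_cast; ring,
      ← Complex.ofReal_exp]
    push_cast
    ring
  -- differentiability facts at z
  have hmem := hΩ.mem_nhds hz
  have hh_at : DifferentiableAt ℂ h z := hh.differentiableAt hmem
  have hdh : DifferentiableAt ℂ (deriv h) z := ((hh.analyticOnNhd hΩ).deriv z hz).differentiableAt
  have hq : DifferentiableAt ℂ (fun t => deriv h t / h t) z := hdh.div hh_at hhz
  have hw_diff : DifferentiableAt ℝ w z := (hwC.contDiffAt hmem).differentiableAt (by simp)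
  have hwd_diff : DifferentiableAt ℝ (fun t => wderiv w t) z :=
    (hwdC.contDiffAt hmem).differentiableAt (by simp)
  have huC_diff : DifferentiableAt ℝ uC z := (huCC.contDiffAt hmem).differentiableAt (by simp)
  have h2uC : DifferentiableAt ℝ (fun t => 2 * uC t) z := huC_diff.const_mul 2
  have hE_diff : DifferentiableAt ℝ E z := by
    have : DifferentiableAt ℝ Complex.exp (2 * uC z) :=
      (Complex.differentiable_exp (𝕜 := ℝ)).differentiableAt
    exact this.comp z h2uC
  have hconjh : DifferentiableAt ℝ (fun t => (starRingEnd ℂ) (h t)) z :=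
    ((Complex.conjCLE.toContinuousLinearMap.differentiable).differentiableAt).comp z
      (hh_at.restrictScalars ℝ)
  have hρ_diff : DifferentiableAt ℝ ρ z :=
    (((hh_at.restrictScalars ℝ).mul hconjh).mul hE_diff)
  -- main: wbar of Bu vanishes
  apply differentiableAt_of_wbar_eq_zero
  · -- real differentiability of Bu
    have : DifferentiableAt ℝ (fun t => wderiv w t - (w t)^2 - (deriv h t / h t) * w t) z :=
      (hwd_diff.sub (hw_diff.pow 2)).sub ((hq.restrictScalars ℝ).mul hw_diff)
    exact this.congr_of_eventuallyEq (by filter_upwards with t; rfl)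
  · -- wbar computation
    have hBfun : Bu h u = fun t => (wderiv w t - (w t)^2) - (deriv h t / h t) * w t := by
      funext t; rfl
    rw [hBfun]
    rw [wbar_sub (f := fun t => wderiv w t - (w t)^2) (g := fun t => (deriv h t / h t) * w t)
      (hwd_diff.sub (hw_diff.pow 2)) ((hq.restrictScalars ℝ).mul hw_diff)]
    rw [wbar_sub (g := fun t => (w t)^2) hwd_diff (hw_diff.pow 2)]
    -- squares
    have hsq : wbar (fun t => (w t)^2) z = 2 * w z * wbar w z := by
      have : (fun t => (w t)^2) = fun t => w t * w t := by funext t; ring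
      rw [this, wbar_mul hw_diff hw_diff]
      ring
    -- q * w
    have hqw : wbar (fun t => (deriv h t / h t) * w t) z
        = (deriv h z / h z) * wbar w z := by
      rw [wbar_mul (hq.restrictScalars ℝ) hw_diff, wbar_of_holo hq]
      ring
    -- first term: commute then evaluate
    have hcomm : wbar (fun t => wderiv w t) z = wderiv (fun t => wbar w t) z :=
      wbar_wderiv_comm hΩ (hwC.of_le (WithTop.coe_le_coe.mpr le_top)) hz
    have hcong : wderiv (fun t => wbar w t) z = wderiv ρ z := by
      apply wderiv_congr
      filter_upwards [hmem] with t ht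
      exact hwbarw t ht
    -- wderiv ρ
    have hwE : wderiv E z = E z * (2 * w z) := by
      rw [hEdef]
      rw [wderiv_exp_comp h2uC, wderiv_const_mul 2 huC_diff]
    have hwhh : wderiv (fun t => h t * (starRingEnd ℂ) (h t)) z
        = deriv h z * (starRingEnd ℂ) (h z) := by
      rw [wderiv_mul (hh_at.restrictScalars ℝ) hconjh, wderiv_conj_holo hh_at,
        wderiv_of_holo hh_at]
      ring
    have hwρ : wderiv ρ z = deriv h z * (starRingEnd ℂ) (h z) * E z
        + h z * (starRingEnd ℂ) (h z) * E z * (2 * w z) := by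
      have : ρ = fun t => (fun s => h s * (starRingEnd ℂ) (h s)) t * E t := by
        funext t; rfl
      rw [this, wderiv_mul (f := fun s => h s * (starRingEnd ℂ) (h s))
          ((hh_at.restrictScalars ℝ).mul hconjh) hE_diff, hwE, hwhh]
      ring
    rw [hcomm, hcong, hwρ, hsq, hqw, hwbarw z hz, hρdef]
    field_simp
    ring
end buholo

/-- `A_u = B_u + (1/2)(h'/h)' - (1/4)(h'/h)²`. -/
noncomputable def Au (h : ℂ → ℂ) (u : ℂ → ℝ) (z : ℂ) : ℂ :=
  Bu h u z + (1/2 : ℂ) * deriv (fun w => deriv h w / h w) z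
    - (1/4 : ℂ) * (deriv h z / h z)^2

set_option maxHeartbeats 1000000 in
/-- If `h` has a zero of order `n ≥ 1` at `z₀` and `u` solves `Δu = 4|h|²e^{2u}`, then `A_u`
has a pole of order exactly `2` at `z₀` with leading Laurent coefficient `(1-(n+1)²)/4`. -/
theorem Au_pole_order_two
    (Ω : Set ℂ) (hΩ : IsOpen Ω) (z₀ : ℂ) (hz₀ : z₀ ∈ Ω)
    (n : ℕ) (hn : 1 ≤ n)
    (h h₁ : ℂ → ℂ) (hh : DifferentiableOn ℂ h Ω)
    (hh₁ : DifferentiableOn ℂ h₁ Ω) (hh₁0 : h₁ z₀ ≠ 0)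
    (hfac : ∀ z ∈ Ω, h z = (z - z₀)^n * h₁ z)
    (u : ℂ → ℝ) (hu : ContDiffOn ℝ (⊤ : ℕ∞) u Ω)
    (hpde : ∀ z ∈ Ω, lap u z = 4 * ‖h z‖^2 * Real.exp (2 * u z)) :
    ∃ U ⊆ Ω, z₀ ∈ U ∧ IsOpen U ∧ ∃ b₁ : ℂ, ∃ R : ℂ → ℂ, DifferentiableOn ℂ R U ∧
      ∀ z ∈ U, z ≠ z₀ →
        Au h u z = ((1 - ((n : ℂ) + 1)^2) / 4) / (z - z₀)^2 + b₁ / (z - z₀) + R z := by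
  -- choose a ball where h₁ ≠ 0
  have hcont : ContinuousAt h₁ z₀ := (hh₁.continuousOn.continuousAt (hΩ.mem_nhds hz₀))
  have hne : ∀ᶠ t in nhds z₀, h₁ t ≠ 0 := hcont.eventually_ne hh₁0
  have hsets : {t | h₁ t ≠ 0} ∩ Ω ∈ nhds z₀ := Filter.inter_mem hne (hΩ.mem_nhds hz₀)
  rw [Metric.mem_nhds_iff] at hsets
  obtain ⟨r, hrpos, hrsub⟩ := hsets
  set U : Set ℂ := Metric.ball z₀ r with hUdef
  have hUopen : IsOpen U := Metric.isOpen_ball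
  have hUΩ : U ⊆ Ω := fun t ht => (hrsub ht).2
  have hUne : ∀ z ∈ U, h₁ z ≠ 0 := fun t ht => (hrsub ht).1
  have hz₀U : z₀ ∈ U := Metric.mem_ball_self hrpos
  have hVopen : IsOpen (U \ {z₀}) := hUopen.sdiff isClosed_singleton
  -- h is nonzero on the punctured ball
  have hhne : ∀ z ∈ U, z ≠ z₀ → h z ≠ 0 := by
    intro z hzU hne0
    rw [hfac z (hUΩ hzU)]
    exact mul_ne_zero (pow_ne_zero n (sub_ne_zero.mpr hne0)) (hUne z hzU)
  -- logarithmic derivative of h₁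
  set g : ℂ → ℂ := fun z => deriv h₁ z / h₁ z with hgdef
  have hdh₁ : DifferentiableOn ℂ (deriv h₁) Ω :=
    fun t ht => ((hh₁.analyticOnNhd hΩ).deriv t ht).differentiableAt.differentiableWithinAt
  have hg : DifferentiableOn ℂ g U := (hdh₁.mono hUΩ).div (hh₁.mono hUΩ) hUne
  have hdg : DifferentiableOn ℂ (deriv g) U :=
    fun t ht => ((hg.analyticOnNhd hUopen).deriv t ht).differentiableAt.differentiableWithinAt
  -- derivative of h on U
  have hderivh : ∀ z ∈ U, deriv h z
      = n*(z-z₀)^(n-1)*h₁ z + (z-z₀)^n * deriv h₁ z := by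
    intro z hzU
    have heq : h =ᶠ[nhds z] (fun w => (w - z₀)^n * h₁ w) := by
      filter_upwards [hΩ.mem_nhds (hUΩ hzU)] with t ht
      exact hfac t ht
    rw [heq.deriv_eq]
    have h1 : HasDerivAt (fun w : ℂ => (w - z₀)^n) ((n:ℂ)*(z-z₀)^(n-1)) z := by
      simpa using ((hasDerivAt_id z).sub_const z₀).fun_pow n
    have h2 : HasDerivAt h₁ (deriv h₁ z) z :=
      (hh₁.differentiableAt (hΩ.mem_nhds (hUΩ hzU))).hasDerivAt
    rw [(h1.fun_mul h2).deriv]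
  -- h'/h on the punctured ball
  have hqeq : ∀ z ∈ U, z ≠ z₀ → deriv h z / h z = (n:ℂ)/(z-z₀) + g z := by
    intro z hzU hne0
    have hzz : z - z₀ ≠ 0 := sub_ne_zero.mpr hne0
    have hz1 : h₁ z ≠ 0 := hUne z hzU
    have hpow : (z - z₀)^n = (z-z₀)^(n-1)*(z-z₀) := by
      rw [← pow_succ]
      congr 1
      omega
    have hA : (z-z₀)^(n-1) ≠ 0 := pow_ne_zero _ hzz
    rw [hderivh z hzU, hfac z (hUΩ hzU), hpow, hgdef]
    field_simp
  -- derivative of h'/h on the punctured ball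
  have hq_deriv : ∀ z ∈ U, z ≠ z₀ →
      deriv (fun w => deriv h w / h w) z = -(n:ℂ)/(z-z₀)^2 + deriv g z := by
    intro z hzU hne0
    have hzz : z - z₀ ≠ 0 := sub_ne_zero.mpr hne0
    have heq : (fun w => deriv h w / h w) =ᶠ[nhds z]
        (fun w => (n:ℂ)/(w - z₀) + g w) := by
      filter_upwards [hVopen.mem_nhds ⟨hzU, hne0⟩] with t ht
      exact hqeq t ht.1 ht.2
    rw [heq.deriv_eq]
    have h1 : HasDerivAt (fun w : ℂ => (n:ℂ)/(w-z₀)) (-(n:ℂ)/(z-z₀)^2) z := by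
      have h1' : HasDerivAt (fun w : ℂ => (n:ℂ)/(w-z₀)) ((n:ℂ) * (-1 / (z - z₀)^2)) z := by
        simpa [div_eq_mul_inv] using (((hasDerivAt_id z).sub_const z₀).inv hzz).const_mul (n:ℂ)
      convert h1' using 1
      ring
    have h2 : HasDerivAt g (deriv g z) z :=
      (hg.differentiableAt (hUopen.mem_nhds hzU)).hasDerivAt
    rw [(h1.fun_add h2).deriv]
  -- Au is holomorphic on the punctured ball
  have hAuV : ∀ z ∈ U \ {z₀}, DifferentiableAt ℂ (Au h u) z := by
    intro z hzV
    obtain ⟨hzU, hne0⟩ := hzV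
    have hne0' : z ≠ z₀ := hne0
    have hhz : h z ≠ 0 := hhne z hzU hne0'
    have hB : DifferentiableAt ℂ (Bu h u) z :=
      Bu_differentiableAt hΩ hh hu hpde (hUΩ hzU) hhz
    have hqV : DifferentiableOn ℂ (fun w => deriv h w / h w) (U \ {z₀}) := by
      intro t ht
      have : DifferentiableAt ℂ (fun w => deriv h w / h w) t :=
        (((hh.analyticOnNhd hΩ).deriv t (hUΩ ht.1)).differentiableAt).div
          (hh.differentiableAt (hΩ.mem_nhds (hUΩ ht.1))) (hhne t ht.1 ht.2)
      exact this.differentiableWithinAt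
    have hq_at : DifferentiableAt ℂ (fun w => deriv h w / h w) z :=
      (((hh.analyticOnNhd hΩ).deriv z (hUΩ hzU)).differentiableAt).div
        (hh.differentiableAt (hΩ.mem_nhds (hUΩ hzU))) hhz
    have hdq : DifferentiableAt ℂ (deriv (fun w => deriv h w / h w)) z :=
      ((hqV.analyticOnNhd hVopen).deriv z ⟨hzU, hne0⟩).differentiableAt
    have : DifferentiableAt ℂ (fun t => Bu h u t
        + (1/2 : ℂ) * deriv (fun w => deriv h w / h w) t
        - (1/4 : ℂ) * (deriv h t / h t)^2) z :=
      (hB.add (hdq.const_mul _)).sub ((hq_at.pow 2).const_mul _)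
    exact this.congr_of_eventuallyEq (by filter_upwards with t; rfl)
  -- continuous model for (z-z₀)(Au - c/(z-z₀)²)
  set c : ℂ := (1 - ((n : ℂ) + 1)^2) / 4 with hcdef
  set w : ℂ → ℂ := fun t => wderiv (fun s => ((u s : ℂ))) t with hwdef
  have hwC : ContDiffOn ℝ (⊤ : ℕ∞) w Ω := contDiffOn_wderiv hΩ (contDiffOn_ofReal hu)
  have hwdC : ContDiffOn ℝ (⊤ : ℕ∞) (fun t => wderiv w t) Ω := contDiffOn_wderiv hΩ hwC
  set Ψ : ℂ → ℂ := fun z => (z-z₀) * (wderiv w z - (w z)^2 - g z * w z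
      + ((1/2 : ℂ) * deriv g z - (1/4 : ℂ) * (g z)^2)) - n * w z - ((n:ℂ)/2) * g z with hΨdef
  have hwcont : ContinuousOn w U := hwC.continuousOn.mono hUΩ
  have hwdcont : ContinuousOn (fun t => wderiv w t) U := hwdC.continuousOn.mono hUΩ
  have hgcont : ContinuousOn g U := hg.continuousOn
  have hdgcont : ContinuousOn (deriv g) U := hdg.continuousOn
  have hΨcont : ContinuousOn Ψ U := by
    have p1 : ContinuousOn (fun z : ℂ => z - z₀) U :=
      (continuous_id.sub continuous_const).continuousOn
    have p2 : ContinuousOn (fun z => wderiv w z - (w z)^2 - g z * w z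
        + ((1/2 : ℂ) * deriv g z - (1/4 : ℂ) * (g z)^2)) U :=
      ((hwdcont.sub (hwcont.pow 2)).sub (hgcont.mul hwcont)).add
        ((continuousOn_const.mul hdgcont).sub (continuousOn_const.mul (hgcont.pow 2)))
    exact ((p1.mul p2).sub (continuousOn_const.mul hwcont)).sub
      (continuousOn_const.mul hgcont)
  -- the key identity
  have hΨval : ∀ z : ℂ, Ψ z = (z-z₀) * (wderiv w z - (w z)^2 - g z * w z
      + ((1/2 : ℂ) * deriv g z - (1/4 : ℂ) * (g z)^2)) - n * w z - ((n:ℂ)/2) * g z :=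
    fun z => rfl
  have hkey : ∀ z ∈ U, z ≠ z₀ → (z - z₀) * (Au h u z - c/(z-z₀)^2) = Ψ z := by
    intro z hzU hne0
    have hzz : z - z₀ ≠ 0 := sub_ne_zero.mpr hne0
    have hBeq : Bu h u z = wderiv w z - (w z)^2 - (deriv h z / h z) * w z := rfl
    rw [hΨval z]
    rw [show Au h u z = Bu h u z + (1/2 : ℂ) * deriv (fun w => deriv h w / h w) z
      - (1/4 : ℂ) * (deriv h z / h z)^2 from rfl]
    rw [hBeq, hqeq z hzU hne0, hq_deriv z hzU hne0, hcdef]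
    set B := wderiv w z with hB2
    set W := w z with hW2
    set G1 := g z with hG12
    set G2 := deriv g z with hG22
    set d := z - z₀ with hddef
    clear_value B W G1 G2 d
    have he : d * d⁻¹ = 1 := mul_inv_cancel₀ hzz
    linear_combination (-((n:ℂ)/2)*G1 - (n:ℂ)*W) * he
  -- bounded function Φ
  set Φ : ℂ → ℂ := fun z => if z = z₀ then 0 else (z-z₀) * (Au h u z - c/(z-z₀)^2) with hΦdef
  have hΦeq : ∀ z ∈ U, z ≠ z₀ → Φ z = Ψ z := by
    intro z hzU hne0
    rw [hΦdef]
    simp only [if_neg hne0]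
    exact hkey z hzU hne0
  set s : Set ℂ := Metric.ball z₀ (r/2) with hsdef
  have hsU : s ⊆ U := Metric.ball_subset_ball (by linarith)
  have hscU : Metric.closedBall z₀ (r/2) ⊆ U := Metric.closedBall_subset_ball (by linarith)
  have hsnhds : s ∈ nhds z₀ := Metric.ball_mem_nhds z₀ (by linarith)
  have hΦdiff : DifferentiableOn ℂ Φ (s \ {z₀}) := by
    intro z hz
    have hzU : z ∈ U := hsU hz.1
    have hne0 : z ≠ z₀ := hz.2
    have hzz : z - z₀ ≠ 0 := sub_ne_zero.mpr hne0
    have hd : DifferentiableAt ℂ (fun t => (t-z₀) * (Au h u t - c/(t-z₀)^2)) z := by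
      apply DifferentiableAt.mul
      · exact differentiableAt_id.sub_const z₀
      · exact (hAuV z ⟨hzU, hne0⟩).sub
          ((differentiableAt_const c).div ((differentiableAt_id.sub_const z₀).pow 2)
            (pow_ne_zero 2 hzz))
    have heq : Φ =ᶠ[nhds z] (fun t => (t-z₀) * (Au h u t - c/(t-z₀)^2)) := by
      filter_upwards [hVopen.mem_nhds ⟨hzU, hne0⟩] with t ht
      have htne : t ≠ z₀ := ht.2
      rw [hΦdef]; simp only [if_neg htne]
    exact (hd.congr_of_eventuallyEq heq).differentiableWithinAt
  have hbdd : BddAbove (norm ∘ Φ '' (s \ {z₀})) := by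
    obtain ⟨M, hM⟩ := (Metric.isCompact_of_isClosed_isBounded Metric.isClosed_closedBall
      Metric.isBounded_closedBall).exists_bound_of_continuousOn (hΨcont.mono hscU)
    refine ⟨M, ?_⟩
    rintro y ⟨x, ⟨hxs, hxne⟩, rfl⟩
    have hxne' : x ≠ z₀ := hxne
    simp only [Function.comp_apply]
    rw [hΦeq x (hsU hxs) hxne']
    exact hM x (Metric.ball_subset_closedBall hxs)
  -- removable singularity
  set G : ℂ → ℂ := Function.update Φ z₀ (Filter.limUnder (nhdsWithin z₀ {z₀}ᶜ) Φ) with hGdef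
  have hG : DifferentiableOn ℂ G s :=
    differentiableOn_update_limUnder_of_bddAbove hsnhds hΦdiff hbdd
  have hGeq : ∀ z, z ≠ z₀ → G z = Φ z := by
    intro z hne0
    rw [hGdef]
    exact Function.update_of_ne hne0 _ _
  set R : ℂ → ℂ := dslope G z₀ with hRdef
  have hR : DifferentiableOn ℂ R s := (differentiableOn_dslope hsnhds).mpr hG
  refine ⟨s, fun t ht => hUΩ (hsU ht), Metric.mem_ball_self (by linarith), Metric.isOpen_ball,
    G z₀, R, hR, ?_⟩
  intro z hzs hne0
  have hzz : z - z₀ ≠ 0 := sub_ne_zero.mpr hne0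
  have hRz : R z = (G z - G z₀)/(z - z₀) := by
    rw [hRdef, dslope_of_ne _ hne0, slope_def_field]
  have hGz : G z = (z-z₀) * (Au h u z - c/(z-z₀)^2) := by
    rw [hGeq z hne0, hΦdef]
    simp only [if_neg hne0]
  rw [hRz]
  have h6 : Au h u z - c/(z-z₀)^2 = G z / (z-z₀) := by
    rw [hGz]
    exact (mul_div_cancel_left₀ _ hzz).symm
  linear_combination h6
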